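/- Let x̃ : [0,∞) → ℝⁿ be absolutely continuous and define Θ(t) = Θ(0) - ∫₀ᵗ [e(τ)ᵀ(T₂(τ) - p₂ sgn(x̃(τ))) + x̃'(τ)ᵀ T₅(τ) - p₃ ρ(‖θ(τ)‖)‖θ(τ)‖‖x̃(τ)‖] dτ with Θ(0) = p₂ Σᵢ|x̃ᵢ(0)| - x̃(0)ᵀT₆(0), where e = x̃' + αx̃, T₆ = T₂ + T₅, ‖T₂‖ ≤ c₁, ‖T₅‖ ≤ c₄, ‖T₆'‖ ≤ c₅ + c₆ρ(‖θ‖)‖θ‖, and sgn acts componentwise. If p₂ > max{c₁ + c₄, c₁ + c₅/α} and p₃ > c₆, then Θ(t) ≥ 0 for all t ≥ 0. -/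

import Mathlib

/-!
Integrating by parts, and using `∫₀ᵗ x̃ᵢ' sgn x̃ᵢ = |x̃ᵢ(t)| - |x̃ᵢ(0)|` (the function `|x̃ᵢ|` is
absolutely continuous, with derivative `x̃ᵢ' sgn x̃ᵢ` wherever `x̃ᵢ` is differentiable, since at a
zero of `x̃ᵢ` it has a local minimum), one gets
`Θ(t) = (p₂ Σᵢ |x̃ᵢ(t)| - x̃(t)ᵀT₆(t)) + ∫₀ᵗ (p₃ ρ‖θ‖ ‖x̃‖ + α p₂ Σᵢ |x̃ᵢ| + x̃ᵀT₆' - α x̃ᵀT₂)`.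
Both terms are nonnegative: `‖x̃‖ ≤ Σᵢ |x̃ᵢ|` and `‖T₆‖ ≤ c₁ + c₄ < p₂` for the first, and
`p₂ > c₁ + c₅ / α`, `p₃ > c₆` pointwise for the integrand.
-/

open MeasureTheory Set

theorem Real.sign_eq_coe_sign (x : ℝ) : Real.sign x = (SignType.sign x : ℝ) := by
  rcases lt_trichotomy x 0 with h | rfl | h
  · simp [Real.sign_of_neg h, h]
  · simp
  · simp [Real.sign_of_pos h, h]

theorem Real.self_mul_sign (x : ℝ) : x * Real.sign x = |x| := by
  rw [Real.sign_eq_coe_sign, _root_.self_mul_sign]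

theorem deriv_abs_comp {f : ℝ → ℝ} {x : ℝ} (hf : DifferentiableAt ℝ f x) :
    deriv (fun y => |f y|) x = deriv f x * Real.sign (f x) := by
  by_cases h : f x = 0
  · have hmin : IsLocalMin (fun y => |f y|) x :=
      Filter.Eventually.of_forall fun y => by simp [h]
    simp [hmin.deriv_eq_zero, h]
  · have hd : HasDerivAt (fun y => |f y|) (SignType.sign (f x) * deriv f x) x :=
      (hasDerivAt_abs h).comp x hf.hasDerivAt
    rw [hd.deriv, Real.sign_eq_coe_sign, mul_comm]

theorem AbsolutelyContinuousOnInterval.abs {f : ℝ → ℝ} {a b : ℝ}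
    (hf : AbsolutelyContinuousOnInterval f a b) :
    AbsolutelyContinuousOnInterval (fun x => |f x|) a b := by
  rw [absolutelyContinuousOnInterval_iff] at hf ⊢
  intro ε hε
  obtain ⟨δ, hδ, h⟩ := hf ε hε
  refine ⟨δ, hδ, fun E hE hlen => lt_of_le_of_lt ?_ (h E hE hlen)⟩
  exact Finset.sum_le_sum fun i _ => abs_abs_sub_abs_le_abs_sub _ _

theorem AbsolutelyContinuousOnInterval.deriv_abs_ae_eq {f : ℝ → ℝ} {a b : ℝ}
    (hf : AbsolutelyContinuousOnInterval f a b) :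
    deriv (fun x => |f x|) =ᵐ[volume.restrict (uIoc a b)]
      fun x => deriv f x * Real.sign (f x) := by
  rw [Filter.EventuallyEq, ae_restrict_iff' measurableSet_uIoc]
  filter_upwards [hf.ae_differentiableAt] with x hx hx'
  exact deriv_abs_comp (hx (uIoc_subset_uIcc hx'))

theorem AbsolutelyContinuousOnInterval.integral_deriv_mul_sign {f : ℝ → ℝ} {a b : ℝ}
    (hf : AbsolutelyContinuousOnInterval f a b) :
    ∫ x in a..b, deriv f x * Real.sign (f x) = |f b| - |f a| := by
  rw [← hf.abs.integral_deriv_eq_sub]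
  exact (intervalIntegral.integral_congr_ae_restrict hf.deriv_abs_ae_eq).symm

theorem AbsolutelyContinuousOnInterval.intervalIntegrable_deriv_mul_sign {f : ℝ → ℝ} {a b : ℝ}
    (hf : AbsolutelyContinuousOnInterval f a b) :
    IntervalIntegrable (fun x => deriv f x * Real.sign (f x)) volume a b :=
  hf.abs.intervalIntegrable_deriv.congr_ae hf.deriv_abs_ae_eq

theorem absolutelyContinuousOnInterval_of_hasDerivAt {E : Type*} [NormedAddCommGroup E]
    [NormedSpace ℝ E] {f f' : ℝ → E} (hf : ∀ x, HasDerivAt f (f' x) x) (hf' : Continuous f')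
    (a b : ℝ) : AbsolutelyContinuousOnInterval f a b := by
  have hderiv : deriv f = f' := funext fun x => (hf x).deriv
  refine ContDiffOn.absolutelyContinuousOnInterval (ContDiff.contDiffOn ?_)
  exact contDiff_one_iff_deriv.2 ⟨fun x => (hf x).differentiableAt, hderiv ▸ hf'⟩

theorem integral_mul_sign_of_hasDerivAt {f f' : ℝ → ℝ} (hf : ∀ x, HasDerivAt f (f' x) x)
    (hf' : Continuous f') (a b : ℝ) :
    ∫ x in a..b, f' x * Real.sign (f x) = |f b| - |f a| := by
  have h := (absolutelyContinuousOnInterval_of_hasDerivAt hf hf' a b).integral_deriv_mul_sign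
  rwa [funext fun x => (hf x).deriv] at h

theorem intervalIntegrable_mul_sign_of_hasDerivAt {f f' : ℝ → ℝ}
    (hf : ∀ x, HasDerivAt f (f' x) x) (hf' : Continuous f') (a b : ℝ) :
    IntervalIntegrable (fun x => f' x * Real.sign (f x)) volume a b := by
  have h :=
    (absolutelyContinuousOnInterval_of_hasDerivAt hf hf' a b).intervalIntegrable_deriv_mul_sign
  rwa [funext fun x => (hf x).deriv] at h

theorem Monotone.intervalIntegrable_comp {ρ θ : ℝ → ℝ} (hρ : Monotone ρ) (hθ : Continuous θ)
    (a b : ℝ) : IntervalIntegrable (fun τ => ρ (θ τ)) volume a b := by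
  obtain ⟨m, hm⟩ := (isCompact_uIcc.image hθ).bddBelow
  obtain ⟨M, hM⟩ := (isCompact_uIcc.image hθ).bddAbove
  refine (intervalIntegrable_const (c := max |ρ m| |ρ M|)).mono_fun'
    (hρ.measurable.comp hθ.measurable).aestronglyMeasurable
    (ae_restrict_of_forall_mem measurableSet_uIoc fun τ hτ => ?_)
  have hτ' : θ τ ∈ θ '' uIcc a b := mem_image_of_mem θ (uIoc_subset_uIcc hτ)
  exact abs_le_max_abs_abs (hρ (hm hτ')) (hρ (hM hτ'))

theorem intervalIntegrable_inner_of_norm_le {F : Type*} [NormedAddCommGroup F]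
    [InnerProductSpace ℝ F] {x y : ℝ → F} {g : ℝ → ℝ} {a b : ℝ} (hx : Continuous x)
    (hy : AEStronglyMeasurable y) (hyg : ∀ τ, ‖y τ‖ ≤ g τ) (hg : IntervalIntegrable g volume a b) :
    IntervalIntegrable (fun τ => inner ℝ (x τ) (y τ)) volume a b := by
  refine (hg.continuousOn_mul hx.norm.continuousOn).mono_fun'
    (hx.aestronglyMeasurable.inner hy).restrict (ae_of_all _ fun τ => ?_)
  exact (norm_inner_le_norm _ _).trans (mul_le_mul_of_nonneg_left (hyg τ) (norm_nonneg _))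

namespace EuclideanSpace

variable {ι : Type*} [Fintype ι]

theorem norm_le_sum_abs (x : EuclideanSpace ℝ ι) : ‖x‖ ≤ ∑ i, |x i| := by
  rw [EuclideanSpace.norm_eq]
  refine Real.sqrt_le_iff.2 ⟨Finset.sum_nonneg fun _ _ => abs_nonneg _, ?_⟩
  simpa only [Real.norm_eq_abs, sq_abs] using
    Finset.sum_sq_le_sq_sum_of_nonneg fun i _ => abs_nonneg (x i)

theorem inner_toLp_sign (v x : EuclideanSpace ℝ ι) :
    inner ℝ v (WithLp.toLp 2 fun i => Real.sign (x i)) = ∑ i, v i * Real.sign (x i) := by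
  simp [PiLp.inner_apply, mul_comm]

theorem inner_self_toLp_sign (x : EuclideanSpace ℝ ι) :
    inner ℝ x (WithLp.toLp 2 fun i => Real.sign (x i)) = ∑ i, |x i| := by
  simp only [inner_toLp_sign, Real.self_mul_sign]

theorem inner_le_mul_sum_abs {x y : EuclideanSpace ℝ ι} {p : ℝ} (hy : ‖y‖ ≤ p) :
    inner ℝ x y ≤ p * ∑ i, |x i| :=
  calc inner ℝ x y ≤ ‖x‖ * ‖y‖ := real_inner_le_norm _ _
    _ ≤ (∑ i, |x i|) * p := mul_le_mul (norm_le_sum_abs x) hy (norm_nonneg _)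
          (Finset.sum_nonneg fun _ _ => abs_nonneg _)
    _ = p * ∑ i, |x i| := mul_comm _ _

theorem hasDerivAt_apply {x : ℝ → EuclideanSpace ℝ ι} {x' : EuclideanSpace ℝ ι} {t : ℝ}
    (hx : HasDerivAt x x' t) (i : ι) : HasDerivAt (fun τ => x τ i) (x' i) t :=
  (EuclideanSpace.proj (𝕜 := ℝ) i).hasFDerivAt.comp_hasDerivAt t hx

theorem intervalIntegrable_inner_toLp_sign {x x' : ℝ → EuclideanSpace ℝ ι}
    (hx : ∀ t, HasDerivAt x (x' t) t) (hx' : Continuous x') (a b : ℝ) :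
    IntervalIntegrable (fun τ => inner ℝ (x' τ) (WithLp.toLp 2 fun i => Real.sign (x τ i)))
      volume a b := by
  simpa only [inner_toLp_sign, Finset.sum_fn] using IntervalIntegrable.sum Finset.univ fun i _ =>
    intervalIntegrable_mul_sign_of_hasDerivAt (fun t => hasDerivAt_apply (hx t) i) (by fun_prop) a b

theorem integral_inner_toLp_sign {x x' : ℝ → EuclideanSpace ℝ ι}
    (hx : ∀ t, HasDerivAt x (x' t) t) (hx' : Continuous x') (a b : ℝ) :
    ∫ τ in a..b, inner ℝ (x' τ) (WithLp.toLp 2 fun i => Real.sign (x τ i)) =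
      ∑ i, |x b i| - ∑ i, |x a i| := by
  simp only [inner_toLp_sign]
  rw [intervalIntegral.integral_finsetSum fun i _ => intervalIntegrable_mul_sign_of_hasDerivAt
    (fun t => hasDerivAt_apply (hx t) i) (by fun_prop) a b, ← Finset.sum_sub_distrib]
  exact Finset.sum_congr rfl fun i _ =>
    integral_mul_sign_of_hasDerivAt (fun t => hasDerivAt_apply (hx t) i) (by fun_prop) a b

end EuclideanSpace

theorem integral_rise_integrand_eq {ι : Type*} [Fintype ι]
    {x x' e T₂ T₅ T₆ T₆' : ℝ → EuclideanSpace ℝ ι} {α p₂ : ℝ} {q : ℝ → ℝ} {a b : ℝ}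
    (hx : ∀ t, HasDerivAt x (x' t) t) (hx' : Continuous x')
    (he : ∀ t, e t = x' t + α • x t) (hT₂ : Continuous T₂) (hT₆ : ∀ t, T₆ t = T₂ t + T₅ t)
    (hT₆' : ∀ t, HasDerivAt T₆ (T₆' t) t)
    (hxT₆' : IntervalIntegrable (fun τ => inner ℝ (x τ) (T₆' τ)) volume a b)
    (hq : IntervalIntegrable q volume a b) :
    ∫ τ in a..b, (inner ℝ (e τ) (T₂ τ - p₂ • WithLp.toLp 2 fun i => Real.sign (x τ i))
        + inner ℝ (x' τ) (T₅ τ) - q τ) =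
      (inner ℝ (x b) (T₆ b) - p₂ * ∑ i, |x b i|) - (inner ℝ (x a) (T₆ a) - p₂ * ∑ i, |x a i|) -
        ∫ τ in a..b, (q τ + α * p₂ * ∑ i, |x τ i| + inner ℝ (x τ) (T₆' τ) -
          α * inner ℝ (x τ) (T₂ τ)) := by
  have hxc : Continuous x := continuous_iff_continuousAt.2 fun t => (hx t).continuousAt
  have hT₆c : Continuous T₆ := continuous_iff_continuousAt.2 fun t => (hT₆' t).continuousAt
  have hpoint : ∀ τ, inner ℝ (e τ) (T₂ τ - p₂ • WithLp.toLp 2 fun i => Real.sign (x τ i))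
      + inner ℝ (x' τ) (T₅ τ) - q τ =
      (inner ℝ (x τ) (T₆' τ) + inner ℝ (x' τ) (T₆ τ))
        - p₂ * inner ℝ (x' τ) (WithLp.toLp 2 fun i => Real.sign (x τ i))
        - (q τ + α * p₂ * ∑ i, |x τ i| + inner ℝ (x τ) (T₆' τ) - α * inner ℝ (x τ) (T₂ τ)) := by
    intro τ
    rw [he, hT₆, ← EuclideanSpace.inner_self_toLp_sign]
    simp only [inner_add_left, inner_add_right, inner_sub_right, real_inner_smul_left,
      real_inner_smul_right]
    ring
  have hG'int : IntervalIntegrable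
      (fun τ => inner ℝ (x τ) (T₆' τ) + inner ℝ (x' τ) (T₆ τ)) volume a b :=
    hxT₆'.add ((by fun_prop : Continuous fun τ => inner ℝ (x' τ) (T₆ τ)).intervalIntegrable a b)
  have hG : ∫ τ in a..b, (inner ℝ (x τ) (T₆' τ) + inner ℝ (x' τ) (T₆ τ)) =
      inner ℝ (x b) (T₆ b) - inner ℝ (x a) (T₆ a) :=
    intervalIntegral.integral_eq_sub_of_hasDerivAt (fun τ _ => (hx τ).inner ℝ (hT₆' τ)) hG'int
  have hL1 : Continuous fun τ => α * p₂ * ∑ i, |x τ i| := by fun_prop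
  have hxT₂ : Continuous fun τ => α * inner ℝ (x τ) (T₂ τ) := by fun_prop
  have hD : IntervalIntegrable (fun τ => q τ + α * p₂ * ∑ i, |x τ i| + inner ℝ (x τ) (T₆' τ) -
      α * inner ℝ (x τ) (T₂ τ)) volume a b :=
    ((hq.add (hL1.intervalIntegrable a b)).add hxT₆').sub (hxT₂.intervalIntegrable a b)
  have hS := (EuclideanSpace.intervalIntegrable_inner_toLp_sign hx hx' a b).const_mul p₂
  rw [intervalIntegral.integral_congr fun τ _ => hpoint τ,
    intervalIntegral.integral_sub (hG'int.sub hS) hD, intervalIntegral.integral_sub hG'int hS,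
    intervalIntegral.integral_const_mul, hG, EuclideanSpace.integral_inner_toLp_sign hx hx']
  ring

theorem rise_dissipation_nonneg {F : Type*} [NormedAddCommGroup F] [InnerProductSpace ℝ F]
    {x T₂ T₆' : F} {α p₂ p₃ c₁ c₅ c₆ r L : ℝ} (hα : 0 < α) (hp₂ : 0 ≤ p₂) (hr : 0 ≤ r)
    (hxL : ‖x‖ ≤ L) (hT₂ : ‖T₂‖ ≤ c₁) (hT₆' : ‖T₆'‖ ≤ c₅ + c₆ * r)
    (hgain₂ : c₁ + c₅ / α < p₂) (hgain₃ : c₆ < p₃) :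
    0 ≤ p₃ * r * ‖x‖ + α * p₂ * L + inner ℝ x T₆' - α * inner ℝ x T₂ := by
  have hgain₂' : α * c₁ + c₅ < α * p₂ := by
    have := mul_lt_mul_of_pos_left hgain₂ hα
    rwa [mul_add, mul_div_cancel₀ _ hα.ne'] at this
  have h₁ : inner ℝ x T₂ ≤ ‖x‖ * c₁ :=
    (real_inner_le_norm _ _).trans (mul_le_mul_of_nonneg_left hT₂ (norm_nonneg _))
  have h₂ : -inner ℝ x T₆' ≤ ‖x‖ * (c₅ + c₆ * r) :=
    (neg_le_abs _).trans ((abs_real_inner_le_norm _ _).trans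
      (mul_le_mul_of_nonneg_left hT₆' (norm_nonneg _)))
  have h₃ : α * p₂ * ‖x‖ ≤ α * p₂ * L := mul_le_mul_of_nonneg_left hxL (by positivity)
  nlinarith [norm_nonneg x, mul_nonneg hr (norm_nonneg x)]

theorem rise_P_function_nonneg_general
    {n : ℕ} (xe xe' : ℝ → EuclideanSpace ℝ (Fin n))
    (T₂ T₅ : ℝ → EuclideanSpace ℝ (Fin n))
    (α p₂ p₃ c₁ c₄ c₅ c₆ : ℝ) (ρ : ℝ → ℝ)
    (hα : 0 < α) (hp₂ : 0 < p₂)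
    (hρmono : Monotone ρ) (hρpos : ∀ r, 0 ≤ ρ r)
    (hxe : ∀ t, HasDerivAt xe (xe' t) t) (hxe'c : Continuous xe')
    (hT₂c : Continuous T₂)
    (e : ℝ → EuclideanSpace ℝ (Fin n)) (he : ∀ t, e t = xe' t + α • xe t)
    (θn : ℝ → ℝ) (hθn : ∀ t, θn t = Real.sqrt (‖xe t‖^2 + ‖e t‖^2))
    (T₆ T₆' : ℝ → EuclideanSpace ℝ (Fin n))
    (hT₆ : ∀ t, T₆ t = T₂ t + T₅ t)
    (hT₆d : ∀ t, HasDerivAt T₆ (T₆' t) t)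
    (hbT₂ : ∀ t, ‖T₂ t‖ ≤ c₁) (hbT₅ : ∀ t, ‖T₅ t‖ ≤ c₄)
    (hbT₆' : ∀ t, ‖T₆' t‖ ≤ c₅ + c₆ * ρ (θn t) * θn t)
    (hgain₂ : p₂ > max (c₁ + c₄) (c₁ + c₅ / α)) (hgain₃ : p₃ > c₆)
    (Θ : ℝ → ℝ)
    (hΘ : ∀ t, Θ t = (p₂ * (∑ i, |xe 0 i|) - (inner ℝ (xe 0) (T₆ 0) : ℝ)) -
      ∫ τ in (0:ℝ)..t,
        ((inner ℝ (e τ) (T₂ τ - p₂ • (show EuclideanSpace ℝ (Fin n) from WithLp.toLp 2 fun i => Real.sign (xe τ i))) : ℝ)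
          + (inner ℝ (xe' τ) (T₅ τ) : ℝ)
          - p₃ * ρ (θn τ) * θn τ * ‖xe τ‖)) :
    ∀ t, 0 ≤ t → 0 ≤ Θ t := by
  intro t ht
  obtain ⟨hgain₂₄, hgain₂₅⟩ := max_lt_iff.mp hgain₂
  have hxc : Continuous xe := continuous_iff_continuousAt.2 fun τ => (hxe τ).continuousAt
  have hθc : Continuous θn := by
    rw [funext hθn]
    simp only [he]
    fun_prop
  have hρθ := hρmono.intervalIntegrable_comp hθc 0 t
  have hT₆'m : AEStronglyMeasurable T₆' := by
    rw [← funext fun τ => (hT₆d τ).deriv]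
    exact (stronglyMeasurable_deriv T₆).aestronglyMeasurable
  have hxT₆' : IntervalIntegrable (fun τ => inner ℝ (xe τ) (T₆' τ)) volume 0 t :=
    intervalIntegrable_inner_of_norm_le hxc hT₆'m hbT₆'
      (intervalIntegrable_const.add ((hρθ.const_mul c₆).mul_continuousOn hθc.continuousOn))
  have hq : IntervalIntegrable (fun τ => p₃ * ρ (θn τ) * θn τ * ‖xe τ‖) volume 0 t :=
    ((hρθ.const_mul p₃).mul_continuousOn hθc.continuousOn).mul_continuousOn
      hxc.norm.continuousOn
  have hboundary : inner ℝ (xe t) (T₆ t) ≤ p₂ * ∑ i, |xe t i| := by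
    refine EuclideanSpace.inner_le_mul_sum_abs ?_
    linarith [hT₆ t ▸ norm_add_le (T₂ t) (T₅ t), hbT₂ t, hbT₅ t]
  have hdissipation : 0 ≤ ∫ τ in (0:ℝ)..t, (p₃ * ρ (θn τ) * θn τ * ‖xe τ‖ +
      α * p₂ * ∑ i, |xe τ i| + inner ℝ (xe τ) (T₆' τ) - α * inner ℝ (xe τ) (T₂ τ)) := by
    refine intervalIntegral.integral_nonneg_of_forall ht fun τ => ?_
    have hθ : 0 ≤ θn τ := hθn τ ▸ Real.sqrt_nonneg _
    have := rise_dissipation_nonneg hα hp₂.le (mul_nonneg (hρpos _) hθ)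
      (EuclideanSpace.norm_le_sum_abs (xe τ)) (hbT₂ τ) ((hbT₆' τ).trans_eq (by ring))
      hgain₂₅ hgain₃
    linarith
  -- `dsimp` removes the `show … from` wrapper so that the integrand matches syntactically
  dsimp only at hΘ
  rw [hΘ t, integral_rise_integrand_eq hxe hxe'c he hT₂c hT₆ hT₆d hxT₆' hq]
  linarith

theorem rise_P_function_nonneg
    {n : ℕ} (xe xe' : ℝ → EuclideanSpace ℝ (Fin n))
    (T₂ T₅ : ℝ → EuclideanSpace ℝ (Fin n))
    (α p₂ p₃ c₁ c₄ c₅ c₆ : ℝ) (ρ : ℝ → ℝ)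
    (hα : 0 < α) (hp₂ : 0 < p₂) (hp₃ : 0 < p₃)
    (hρmono : Monotone ρ) (hρpos : ∀ r, 0 ≤ ρ r)
    (hxe : ∀ t, HasDerivAt xe (xe' t) t) (hxe'c : Continuous xe')
    (hT₂c : Continuous T₂) (hT₅c : Continuous T₅)
    (e : ℝ → EuclideanSpace ℝ (Fin n)) (he : ∀ t, e t = xe' t + α • xe t)
    (θn : ℝ → ℝ) (hθn : ∀ t, θn t = Real.sqrt (‖xe t‖^2 + ‖e t‖^2))
    (T₆ T₆' : ℝ → EuclideanSpace ℝ (Fin n))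
    (hT₆ : ∀ t, T₆ t = T₂ t + T₅ t)
    (hT₆d : ∀ t, HasDerivAt T₆ (T₆' t) t)
    (hbT₂ : ∀ t, ‖T₂ t‖ ≤ c₁) (hbT₅ : ∀ t, ‖T₅ t‖ ≤ c₄)
    (hbT₆' : ∀ t, ‖T₆' t‖ ≤ c₅ + c₆ * ρ (θn t) * θn t)
    (hgain₂ : p₂ > max (c₁ + c₄) (c₁ + c₅ / α)) (hgain₃ : p₃ > c₆)
    (Θ : ℝ → ℝ)
    (hΘ : ∀ t, Θ t = (p₂ * (∑ i, |xe 0 i|) - (inner ℝ (xe 0) (T₆ 0) : ℝ)) -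
      ∫ τ in (0:ℝ)..t,
        ((inner ℝ (e τ) (T₂ τ - p₂ • (show EuclideanSpace ℝ (Fin n) from WithLp.toLp 2 fun i => Real.sign (xe τ i))) : ℝ)
          + (inner ℝ (xe' τ) (T₅ τ) : ℝ)
          - p₃ * ρ (θn τ) * θn τ * ‖xe τ‖)) :
    ∀ t, 0 ≤ t → 0 ≤ Θ t :=
  rise_P_function_nonneg_general xe xe' T₂ T₅ α p₂ p₃ c₁ c₄ c₅ c₆ ρ hα hp₂ hρmono hρpos hxe hxe'c
    hT₂c e he θn hθn T₆ T₆' hT₆ hT₆d hbT₂ hbT₅ hbT₆' hgain₂ hgain₃ Θ hΘ
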